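/- arXiv:2310.20421 — 3 statements merged into one kernel-verified Lean document; each statement's English description precedes it below -/
import Mathlib

section
/- Let Δ be a complex matrix on ℂ^{d_A} ⊗ ℂ^{d_B} and B a d_B×d_B complex matrix. Then ‖Tr_B[(I_{d_A} ⊗ B†) Δ]‖ ≤ √(d_A d_B) · ‖B‖ · ‖Δ‖. -/
open Matrix Kronecker

/-- Frobenius norm of a complex matrix. -/
noncomputable def frob {m n : Type*} [Fintype m] [Fintype n] (M : Matrix m n ℂ) : ℝ :=
  Real.sqrt (∑ i, ∑ j, ‖M i j‖ ^ 2)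

/-- Partial trace over the second tensor factor. -/
noncomputable def trB {dA dB : ℕ} (X : Matrix (Fin dA × Fin dB) (Fin dA × Fin dB) ℂ) :
    Matrix (Fin dA) (Fin dA) ℂ :=
  Matrix.of fun i i' => ∑ j, X (i, j) (i', j)

/-!
Each entry of `Tr_B[(I ⊗ B†) Δ]` pairs `B` with a `d_B × d_B` block of `Δ`, so by Cauchy–Schwarz
its squared modulus is at most `‖B‖²` times the squared norm of that block. These blocks partition
the entries of `Δ`, which gives the sharper bound `‖B‖ ‖Δ‖`; the factor `√(d_A d_B)` is at least `1`
unless the index type is empty, in which case `Δ = 0`.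
-/

theorem norm_sum_mul_sq_le {ι R : Type*} [SeminormedRing R] (s : Finset ι) (f g : ι → R) :
    ‖∑ i ∈ s, f i * g i‖ ^ 2 ≤ (∑ i ∈ s, ‖f i‖ ^ 2) * ∑ i ∈ s, ‖g i‖ ^ 2 :=
  calc ‖∑ i ∈ s, f i * g i‖ ^ 2 ≤ (∑ i ∈ s, ‖f i‖ * ‖g i‖) ^ 2 := by
        gcongr
        exact (norm_sum_le _ _).trans (Finset.sum_le_sum fun i _ => norm_mul_le _ _)
    _ ≤ (∑ i ∈ s, ‖f i‖ ^ 2) * ∑ i ∈ s, ‖g i‖ ^ 2 := Finset.sum_mul_sq_le_sq_mul_sq _ _ _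

theorem frob_sq {m n : Type*} [Fintype m] [Fintype n] (M : Matrix m n ℂ) :
    frob M ^ 2 = ∑ i, ∑ j, ‖M i j‖ ^ 2 :=
  Real.sq_sqrt (by positivity)

theorem frob_le_iff {m n : Type*} [Fintype m] [Fintype n] (M : Matrix m n ℂ) {c : ℝ} :
    frob M ≤ c ↔ 0 ≤ c ∧ ∑ i, ∑ j, ‖M i j‖ ^ 2 ≤ c ^ 2 :=
  Real.sqrt_le_iff

theorem frob_of_isEmpty {m n : Type*} [Fintype m] [Fintype n] [IsEmpty m] (M : Matrix m n ℂ) :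
    frob M = 0 := by
  simp [frob]

theorem frob_nonneg {m n : Type*} [Fintype m] [Fintype n] (M : Matrix m n ℂ) : 0 ≤ frob M :=
  Real.sqrt_nonneg _

theorem trB_one_kronecker_mul_apply {dA dB : ℕ}
    (Δ : Matrix (Fin dA × Fin dB) (Fin dA × Fin dB) ℂ) (B : Matrix (Fin dB) (Fin dB) ℂ)
    (i i' : Fin dA) :
    trB ((1 ⊗ₖ Bᴴ) * Δ) i i' =
      ∑ p : Fin dB × Fin dB, star (B p.1 p.2) * Δ (i, p.1) (i', p.2) := by
  simp only [trB, of_apply, mul_apply, kroneckerMap_apply, one_apply, conjTranspose_apply,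
    RCLike.star_def, ite_mul, one_mul, zero_mul, Fintype.sum_prod_type, Finset.sum_ite_irrel,
    Finset.sum_const_zero, Finset.sum_ite_eq, Finset.mem_univ, ↓reduceIte]
  exact Finset.sum_comm

theorem frob_trB_one_kronecker_mul_le {dA dB : ℕ}
    (Δ : Matrix (Fin dA × Fin dB) (Fin dA × Fin dB) ℂ) (B : Matrix (Fin dB) (Fin dB) ℂ) :
    frob (trB ((1 ⊗ₖ Bᴴ) * Δ)) ≤ frob B * frob Δ := by
  refine (frob_le_iff _).2 ⟨mul_nonneg (frob_nonneg B) (frob_nonneg Δ), ?_⟩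
  have hB : ∑ p : Fin dB × Fin dB, ‖star (B p.1 p.2)‖ ^ 2 = frob B ^ 2 := by
    simp [frob_sq, Fintype.sum_prod_type]
  have hΔ : ∑ i, ∑ i', ∑ p : Fin dB × Fin dB, ‖Δ (i, p.1) (i', p.2)‖ ^ 2 = frob Δ ^ 2 := by
    simp only [frob_sq, Fintype.sum_prod_type]
    exact Fintype.sum_congr _ _ fun i => Finset.sum_comm
  calc ∑ i, ∑ i', ‖trB ((1 ⊗ₖ Bᴴ) * Δ) i i'‖ ^ 2
      ≤ ∑ i, ∑ i', frob B ^ 2 * ∑ p : Fin dB × Fin dB, ‖Δ (i, p.1) (i', p.2)‖ ^ 2 := by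
        gcongr with i _ i' _
        rw [trB_one_kronecker_mul_apply, ← hB]
        exact norm_sum_mul_sq_le _ _ _
    _ = (frob B * frob Δ) ^ 2 := by
        simp_rw [← Finset.mul_sum, hΔ, mul_pow]

/-- ‖Tr_B[(I ⊗ B†) Δ]‖ ≤ √(d_A d_B) ‖B‖ ‖Δ‖. -/
theorem partialTrace_mul_norm_bound {dA dB : ℕ}
    (Δ : Matrix (Fin dA × Fin dB) (Fin dA × Fin dB) ℂ)
    (B : Matrix (Fin dB) (Fin dB) ℂ) :
    frob (trB (((1 : Matrix (Fin dA) (Fin dA) ℂ) ⊗ₖ Bᴴ) * Δ)) ≤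
      Real.sqrt (dA * dB) * frob B * frob Δ := by
  have hbound := frob_trB_one_kronecker_mul_le Δ B
  rcases isEmpty_or_nonempty (Fin dA × Fin dB) with _ | ⟨i, j⟩
  · simpa [frob_of_isEmpty Δ] using hbound
  · have hdim : 1 ≤ Real.sqrt (dA * dB) :=
      Real.one_le_sqrt.2 <|
        one_le_mul_of_one_le_of_one_le (Nat.one_le_cast.2 i.pos) (Nat.one_le_cast.2 j.pos)
    calc _ ≤ frob B * frob Δ := hbound
      _ ≤ Real.sqrt (dA * dB) * (frob B * frob Δ) :=
        le_mul_of_one_le_left (mul_nonneg (frob_nonneg B) (frob_nonneg Δ)) hdim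
      _ = Real.sqrt (dA * dB) * frob B * frob Δ := (mul_assoc _ _ _).symm
end

section
/- Let H be an n×n Hermitian complex matrix with spectral decomposition H = W K W†, where W is unitary and K = diag(k_1, …, k_n) is real diagonal. Define H₊ = W diag(z_1, …, z_n) W† where z_i = k_i if k_i ≥ 0 and z_i = 0 if k_i < 0. Then H₊ is Hermitian positive semidefinite, and for every Hermitian positive semidefinite n×n matrix D one has ‖D − H‖ ≥ ‖H₊ − H‖, with equality if and only if D = H₊. -/
open Matrix ComplexOrder

private lemma sumsq_eq_trace {n : ℕ} (M : Matrix (Fin n) (Fin n) ℂ) :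
    ((∑ i, ∑ j, ‖M i j‖ ^ 2 : ℝ) : ℂ) = (Mᴴ * M).trace := by
  rw [Matrix.trace, Finset.sum_comm]
  push_cast
  refine Finset.sum_congr rfl fun j _ => ?_
  rw [Matrix.diag_apply, Matrix.mul_apply]
  refine Finset.sum_congr rfl fun i _ => ?_
  rw [Matrix.conjTranspose_apply]
  rw [show star (M i j) = (starRingEnd ℂ) (M i j) from rfl, RCLike.conj_mul]
  norm_cast

private lemma sumsq_unitary {n : ℕ} (W M : Matrix (Fin n) (Fin n) ℂ)
    (hWW : W * Wᴴ = 1) :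
    ∑ i, ∑ j, ‖(Wᴴ * M * W) i j‖ ^ 2 = ∑ i, ∑ j, ‖M i j‖ ^ 2 := by
  have h1 := sumsq_eq_trace (Wᴴ * M * W)
  have h2 := sumsq_eq_trace M
  have key : ((Wᴴ * M * W)ᴴ * (Wᴴ * M * W)).trace = (Mᴴ * M).trace := by
    have e : (Wᴴ * M * W)ᴴ * (Wᴴ * M * W) = Wᴴ * (Mᴴ * M * W) := by
      simp only [Matrix.conjTranspose_mul, Matrix.conjTranspose_conjTranspose, Matrix.mul_assoc]
      rw [← Matrix.mul_assoc W Wᴴ, hWW, Matrix.one_mul]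
    rw [e, Matrix.trace_mul_comm, Matrix.mul_assoc, hWW, Matrix.mul_one]
  exact_mod_cast h1.trans (key.trans h2.symm)

private lemma scalar_ineq {a kk : ℝ} (ha : 0 ≤ a) :
    ((if 0 ≤ kk then kk else 0) - kk) ^ 2 ≤ (a - kk) ^ 2 := by
  split_ifs with h
  · simpa using sq_nonneg (a - kk)
  · push_neg at h
    have : 0 ≤ a * (a - 2 * kk) := mul_nonneg ha (by linarith)
    nlinarith

private lemma scalar_eq {a kk : ℝ} (ha : 0 ≤ a)
    (h : (a - kk) ^ 2 = ((if 0 ≤ kk then kk else 0) - kk) ^ 2) :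
    a = (if 0 ≤ kk then kk else 0) := by
  split_ifs at h ⊢ with hk
  · nlinarith
  · push_neg at hk
    nlinarith

/-- Truncating the negative eigenvalues of a Hermitian matrix H gives the unique closest
    (in Frobenius norm) positive semidefinite matrix H₊. -/
theorem psd_projection_optimal {n : ℕ}
    (H W K Hplus : Matrix (Fin n) (Fin n) ℂ) (k z : Fin n → ℝ)
    (hH : H.IsHermitian) (hW : W ∈ Matrix.unitaryGroup (Fin n) ℂ)
    (hK : K = Matrix.diagonal fun i => (k i : ℂ))
    (hHWK : H = W * K * Wᴴ)
    (hz : ∀ i, z i = if 0 ≤ k i then k i else 0)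
    (hHplus : Hplus = W * Matrix.diagonal (fun i => (z i : ℂ)) * Wᴴ) :
    Hplus.PosSemidef ∧
      ∀ D : Matrix (Fin n) (Fin n) ℂ, D.PosSemidef →
        frob (Hplus - H) ≤ frob (D - H) ∧ (frob (D - H) = frob (Hplus - H) ↔ D = Hplus) := by
  have hz' : ∀ i, 0 ≤ z i := fun i => by rw [hz i]; split_ifs with h; exacts [h, le_refl 0]
  have hWW : W * Wᴴ = 1 := by
    rw [← Matrix.star_eq_conjTranspose]; exact Matrix.mem_unitaryGroup_iff.mp hW
  have hWW' : Wᴴ * W = 1 := by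
    rw [← Matrix.star_eq_conjTranspose]; exact Matrix.mem_unitaryGroup_iff'.mp hW
  set Z : Matrix (Fin n) (Fin n) ℂ := Matrix.diagonal (fun i => (z i : ℂ)) with hZ
  have hZpsd : Z.PosSemidef := by
    refine Matrix.PosSemidef.diagonal ?_
    intro i
    simpa using Complex.zero_le_real.mpr (hz' i)
  have hconj : ∀ M : Matrix (Fin n) (Fin n) ℂ, Wᴴ * (W * M * Wᴴ) * W = M := by
    intro M
    calc Wᴴ * (W * M * Wᴴ) * W = (Wᴴ * W) * M * (Wᴴ * W) := by simp only [Matrix.mul_assoc]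
      _ = M := by rw [hWW', Matrix.one_mul, Matrix.mul_one]
  have hconj' : ∀ M : Matrix (Fin n) (Fin n) ℂ, W * (Wᴴ * M * W) * Wᴴ = M := by
    intro M
    calc W * (Wᴴ * M * W) * Wᴴ = (W * Wᴴ) * M * (W * Wᴴ) := by simp only [Matrix.mul_assoc]
      _ = M := by rw [hWW, Matrix.one_mul, Matrix.mul_one]
  have hHplusPsd : Hplus.PosSemidef := by
    rw [hHplus]; exact hZpsd.mul_mul_conjTranspose_same W
  refine ⟨hHplusPsd, fun D hD => ?_⟩
  -- transform to the eigenbasis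
  set E : Matrix (Fin n) (Fin n) ℂ := Wᴴ * D * W with hE
  have hEpsd : E.PosSemidef := by
    have := hD.mul_mul_conjTranspose_same Wᴴ
    rwa [Matrix.conjTranspose_conjTranspose] at this
  have hHK : Wᴴ * H * W = K := by rw [hHWK]; exact hconj K
  have hHplusZ : Wᴴ * Hplus * W = Z := by rw [hHplus]; exact hconj Z
  have hsplit : ∀ A B : Matrix (Fin n) (Fin n) ℂ, Wᴴ * (A - B) * W = Wᴴ * A * W - Wᴴ * B * W := by
    intro A B; rw [Matrix.mul_sub, Matrix.sub_mul]
  -- sums of squares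
  have hS1 : ∑ i, ∑ j, ‖(D - H) i j‖ ^ 2 = ∑ i, ∑ j, ‖(E - K) i j‖ ^ 2 := by
    rw [← sumsq_unitary W (D - H) hWW, hsplit, hHK]
  have hS2 : ∑ i, ∑ j, ‖(Hplus - H) i j‖ ^ 2 = ∑ i, ∑ j, ‖(Z - K) i j‖ ^ 2 := by
    rw [← sumsq_unitary W (Hplus - H) hWW, hsplit, hHK, hHplusZ]
  -- diagonal entries of E
  have hEdiag : ∀ i, 0 ≤ E i i := fun i => by
    simpa [dotProduct, Pi.single_apply, Finset.sum_ite_eq] using hEpsd.dotProduct_mulVec_nonneg (Pi.single i 1)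
  have hEre : ∀ i, E i i = ((E i i).re : ℂ) ∧ 0 ≤ (E i i).re := by
    intro i
    obtain ⟨h1, h2⟩ := Complex.nonneg_iff.mp (hEdiag i)
    exact ⟨Complex.ext rfl h2.symm, h1⟩
  -- per-row sums
  have hZK : Z - K = Matrix.diagonal (fun i => ((z i - k i : ℝ) : ℂ)) := by
    rw [hK, hZ, Matrix.diagonal_sub]
    congr 1; funext i; push_cast; ring
  have hg : ∀ i, ∑ j, ‖(Z - K) i j‖ ^ 2 = (z i - k i) ^ 2 := by
    intro i
    rw [Finset.sum_eq_single i]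
    · rw [hZK, Matrix.diagonal_apply_eq, Complex.norm_real, Real.norm_eq_abs, sq_abs]
    · intro j _ hj
      rw [hZK, Matrix.diagonal_apply_ne' _ hj]
      simp
    · intro h; exact absurd (Finset.mem_univ i) h
  have hKij : ∀ i j, K i j = if i = j then ((k i : ℝ) : ℂ) else 0 := by
    intro i j; rw [hK, Matrix.diagonal_apply]
  have hdiagterm : ∀ i, ‖(E - K) i i‖ ^ 2 = ((E i i).re - k i) ^ 2 := by
    intro i
    rw [Matrix.sub_apply, hKij, if_pos rfl, (hEre i).1, ← Complex.ofReal_sub,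
      Complex.norm_real, Real.norm_eq_abs, sq_abs]
    simp
  have hterm : ∀ i, (z i - k i) ^ 2 ≤ ‖(E - K) i i‖ ^ 2 := by
    intro i
    rw [hdiagterm i, hz i]
    exact scalar_ineq (hEre i).2
  have hrow : ∀ i, (z i - k i) ^ 2 ≤ ∑ j, ‖(E - K) i j‖ ^ 2 := by
    intro i
    calc (z i - k i) ^ 2 ≤ ‖(E - K) i i‖ ^ 2 := hterm i
      _ ≤ ∑ j, ‖(E - K) i j‖ ^ 2 :=
        Finset.single_le_sum (f := fun j => ‖(E - K) i j‖ ^ 2) (fun j _ => sq_nonneg _) (Finset.mem_univ i)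
  have hsumle : ∑ i, ∑ j, ‖(Z - K) i j‖ ^ 2 ≤ ∑ i, ∑ j, ‖(E - K) i j‖ ^ 2 := by
    refine Finset.sum_le_sum fun i _ => ?_
    rw [hg i]; exact hrow i
  have hnn1 : (0:ℝ) ≤ ∑ i, ∑ j, ‖(E - K) i j‖ ^ 2 :=
    Finset.sum_nonneg fun i _ => Finset.sum_nonneg fun j _ => sq_nonneg _
  have hnn2 : (0:ℝ) ≤ ∑ i, ∑ j, ‖(Z - K) i j‖ ^ 2 :=
    Finset.sum_nonneg fun i _ => Finset.sum_nonneg fun j _ => sq_nonneg _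
  constructor
  · unfold frob
    rw [hS1, hS2]
    exact Real.sqrt_le_sqrt hsumle
  constructor
  · -- equality implies D = Hplus
    intro hfr
    unfold frob at hfr
    rw [hS1, hS2] at hfr
    have hsums : ∑ i, ∑ j, ‖(Z - K) i j‖ ^ 2 = ∑ i, ∑ j, ‖(E - K) i j‖ ^ 2 :=
      ((Real.sqrt_inj hnn1 hnn2).mp hfr).symm
    have hrows := (Finset.sum_eq_sum_iff_of_le
      (fun i _ => by rw [hg i]; exact hrow i)).mp hsums
    have hEZ : E = Z := by
      ext i j
      have hri := hrows i (Finset.mem_univ i)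
      rw [hg i] at hri
      have hsplit' : ‖(E - K) i i‖ ^ 2 + ∑ j ∈ Finset.univ.erase i, ‖(E - K) i j‖ ^ 2
          = (z i - k i) ^ 2 := by
        rw [Finset.add_sum_erase _ (fun j => ‖(E - K) i j‖ ^ 2) (Finset.mem_univ i)]; exact hri.symm
      have herasenn : (0:ℝ) ≤ ∑ j ∈ Finset.univ.erase i, ‖(E - K) i j‖ ^ 2 :=
        Finset.sum_nonneg fun j _ => sq_nonneg _
      have hdiageq : ‖(E - K) i i‖ ^ 2 = (z i - k i) ^ 2 := le_antisymm
        (by linarith [hterm i]) (hterm i)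
      have herase0 : ∑ j ∈ Finset.univ.erase i, ‖(E - K) i j‖ ^ 2 = 0 := by linarith
      by_cases hij : i = j
      · subst hij
        have : (E i i).re = z i := by
          rw [hz i]
          refine scalar_eq (hEre i).2 ?_
          rw [← hdiagterm i, hdiageq, hz i]
        rw [(hEre i).1, this, hZ, Matrix.diagonal_apply_eq]
      · have : ‖(E - K) i j‖ ^ 2 = 0 :=
          (Finset.sum_eq_zero_iff_of_nonneg fun j _ => sq_nonneg _).mp herase0 j
            (Finset.mem_erase.mpr ⟨fun h => hij h.symm, Finset.mem_univ j⟩)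
        have hEK0 : (E - K) i j = 0 := by
          rwa [pow_eq_zero_iff two_ne_zero, norm_eq_zero] at this
        have : E i j = K i j := by
          have := sub_eq_zero.mp hEK0; exact this
        rw [this, hKij, if_neg hij, hZ, Matrix.diagonal_apply_ne _ hij]
    calc D = W * (Wᴴ * D * W) * Wᴴ := (hconj' D).symm
      _ = W * Z * Wᴴ := by rw [← hE, hEZ]
      _ = Hplus := hHplus.symm
  · intro hDH
    rw [hDH]
end

section
/- Let D̂ be a Hermitian positive semidefinite complex matrix on ℂ^{d} ⊗ ℂ^{d}, and let Ê = Tr_A(D̂) have spectral decomposition Ê = Û diag(ê_1, …, ê_d) Û† with Û unitary, ê_1 ≥ ⋯ ≥ ê_c > 0 and ê_{c+1} = ⋯ = ê_d = 0. Fix a real number N ≥ 1 and define Ē = Û diag(ē_1, …, ē_d) Û† with ē_i = ê_i for 1 ≤ i ≤ c and ē_i = ê_c/N for c+1 ≤ i ≤ d, and Ẽ = Û diag(ẽ_1, …, ẽ_d) Û† with ẽ_i = min(ē_i, 1). Then X̂ = (I_d ⊗ Ẽ^{1/2} Ē^{-1/2}) D̂ (I_d ⊗ Ẽ^{1/2}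 Ē^{-1/2})† is Hermitian positive semidefinite and satisfies Tr_A(X̂) ≤ I_d in the Loewner order (i.e., I_d − Tr_A(X̂) is positive semidefinite). -/
/-!
The partial trace over the first factor commutes with conjugation by `1 ⊗ T`, so
`Tr_A X̂ = T Ê T†`. Everything is diagonal in the eigenbasis `Û`, where the eigenvalues of
`Tr_A X̂` are `(ẽᵢ / ēᵢ) êᵢ`: this is `min(êᵢ, 1)` for `i ≤ c` (where `ēᵢ = êᵢ`) and `0`
for `i > c` (where `êᵢ = 0`), so `I - Tr_A X̂` is PSD.
-/

open Matrix Kronecker ComplexOrder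

noncomputable def trA {d : ℕ} (X : Matrix (Fin d × Fin d) (Fin d × Fin d) ℂ) :
    Matrix (Fin d) (Fin d) ℂ :=
  Matrix.of fun j j' => ∑ i, X (i, j) (i, j')

lemma trA_one_kronecker_mul_mul_conjTranspose {d : ℕ}
    (D : Matrix (Fin d × Fin d) (Fin d × Fin d) ℂ) (T : Matrix (Fin d) (Fin d) ℂ) :
    trA ((1 ⊗ₖ T) * D * (1 ⊗ₖ T)ᴴ) = T * trA D * Tᴴ := by
  ext j j'
  simp only [trA, of_apply, mul_apply, conjTranspose_apply, kroneckerMap_apply, one_apply,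
    Fintype.sum_prod_type, Finset.sum_mul, Finset.mul_sum, apply_ite (star : ℂ → ℂ), star_zero,
    ite_mul, mul_ite, zero_mul, mul_zero, one_mul, Finset.sum_ite_irrel, Finset.sum_const_zero,
    Finset.sum_ite_eq, Finset.mem_univ, if_true]
  rw [Finset.sum_comm]
  exact Finset.sum_congr rfl fun _ _ => Finset.sum_comm

section UnitaryConjugation

variable {n α : Type*} [Fintype n] [DecidableEq n] [CommRing α] [StarRing α]
  {U : Matrix n n α}

lemma unitary_conj_mul_unitary_conj (hU : U ∈ unitaryGroup n α) (A B : Matrix n n α) :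
    U * A * Uᴴ * (U * B * Uᴴ) = U * (A * B) * Uᴴ := by
  have hUU : Uᴴ * U = 1 := mem_unitaryGroup_iff'.mp hU
  simp only [Matrix.mul_assoc]
  rw [← Matrix.mul_assoc Uᴴ U, hUU, Matrix.one_mul]

lemma one_sub_unitary_conj (hU : U ∈ unitaryGroup n α) (A : Matrix n n α) :
    1 - U * A * Uᴴ = U * (1 - A) * Uᴴ := by
  have hUU : U * Uᴴ = 1 := mem_unitaryGroup_iff.mp hU
  rw [Matrix.mul_sub, Matrix.sub_mul, Matrix.mul_one, hUU]

end UnitaryConjugation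

lemma sqrt_min_one_div_sqrt_mul_self_le_one (a : ℝ) :
    √(min a 1) / √a * a * (√(min a 1) / √a) ≤ 1 := by
  rcases le_or_gt a 0 with ha | ha
  · simp [Real.sqrt_eq_zero_of_nonpos ha]
  · calc √(min a 1) / √a * a * (√(min a 1) / √a) = √(min a 1) ^ 2 / √a ^ 2 * a := by ring
      _ = min a 1 := by
        rw [Real.sq_sqrt (by positivity), Real.sq_sqrt ha.le, div_mul_cancel₀ _ ha.ne']
      _ ≤ 1 := min_le_right a 1

/-- The non-trace-preserving second stage of the TSS algorithm: with Ê = Tr_A(D̂) having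
    eigendecomposition Û diag(ê) Û† (ê decreasing, positive up to index c, zero afterwards),
    Ē obtained by replacing zero eigenvalues with ê_c/N, Ẽ by capping eigenvalues at 1, and
    T = Ẽ^{1/2} Ē^{-1/2} (taken in the common eigenbasis Û), the estimate
    X̂ = (I ⊗ T) D̂ (I ⊗ T)† is PSD and satisfies Tr_A(X̂) ≤ I in the Loewner order. -/
theorem tss_nontp_estimate {d : ℕ}
    (Dhat : Matrix (Fin d × Fin d) (Fin d × Fin d) ℂ) (hDhat : Dhat.PosSemidef)
    (U : Matrix (Fin d) (Fin d) ℂ) (hU : U ∈ Matrix.unitaryGroup (Fin d) ℂ)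
    (e : Fin d → ℝ)
    (hE : trA Dhat = U * Matrix.diagonal (fun i => (e i : ℂ)) * Uᴴ)
    (c : ℕ) (hc1 : 1 ≤ c) (hcd : c ≤ d)
    (hzero : ∀ i : Fin d, c ≤ (i : ℕ) → e i = 0)
    (N : ℝ)
    (ebar : Fin d → ℝ)
    (hebar : ∀ i : Fin d, ebar i =
      if (i : ℕ) < c then e i else e ⟨c - 1, by omega⟩ / N)
    (etil : Fin d → ℝ) (hetil : ∀ i, etil i = min (ebar i) 1)
    (T : Matrix (Fin d) (Fin d) ℂ)
    (hT : T = U * Matrix.diagonal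
        (fun i => ((Real.sqrt (etil i) / Real.sqrt (ebar i) : ℝ) : ℂ)) * Uᴴ)
    (Xhat : Matrix (Fin d × Fin d) (Fin d × Fin d) ℂ)
    (hXhat : Xhat = ((1 : Matrix (Fin d) (Fin d) ℂ) ⊗ₖ T) * Dhat *
        ((1 : Matrix (Fin d) (Fin d) ℂ) ⊗ₖ T)ᴴ) :
    Xhat.PosSemidef ∧ ((1 : Matrix (Fin d) (Fin d) ℂ) - trA Xhat).PosSemidef := by
  set t : Fin d → ℝ := fun i => √(etil i) / √(ebar i)
  replace hT : T = U * diagonal (fun i => (t i : ℂ)) * Uᴴ := hT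
  have hT_herm : Tᴴ = T := by
    rw [hT]
    exact isHermitian_mul_mul_conjTranspose U
      (isHermitian_diagonal_of_self_adjoint _ (funext fun i => Complex.conj_ofReal (t i)))
  have htrX : trA Xhat = U * diagonal (fun i => (t i * e i * t i : ℂ)) * Uᴴ := by
    rw [hXhat, trA_one_kronecker_mul_mul_conjTranspose, hT_herm, hE, hT,
      unitary_conj_mul_unitary_conj hU, unitary_conj_mul_unitary_conj hU, diagonal_mul_diagonal,
      diagonal_mul_diagonal]
  have hbound : ∀ i, t i * e i * t i ≤ 1 := by
    intro i
    by_cases hi : (i : ℕ) < c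
    · have hebar_i : ebar i = e i := by rw [hebar i, if_pos hi]
      simpa only [t, hetil i, hebar_i] using sqrt_min_one_div_sqrt_mul_self_le_one (e i)
    · simp [hzero i (not_lt.mp hi)]
  refine ⟨hXhat ▸ hDhat.mul_mul_conjTranspose_same _, ?_⟩
  rw [htrX, one_sub_unitary_conj hU, ← diagonal_one, diagonal_sub]
  refine (posSemidef_diagonal_iff.mpr fun i => ?_).mul_mul_conjTranspose_same U
  exact_mod_cast sub_nonneg.mpr (hbound i)
end
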